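/- Under the Lipschitz assumptions on Upd and the scenario-consistent value V_scen (with constants L_h and L_V), the fixed points of the hybrid and scenario-consistent Bellman operators satisfy ‖V_hyb − V_scen‖_∞ ≤ (δ/(1−δ)) · L_V · L_h · Δ_W. -/
import Mathlib


open MeasureTheory

/-- fixed-point bias bound. Bounded value functions on a state
space `α`; the hybrid and scenario-consistent Bellman operators are
`δ`-contractions in sup norm, the operator gap on `L_V`-Lipschitz value
functions is at most `δ·L_V·L_h·Δ_W` (with `Δ_W` the sup over observations of
the Wasserstein mismatch), and the scenario-consistent fixed point is
`L_V`-Lipschitz. Then `‖V_hyb − V_scen‖_∞ ≤ (δ/(1−δ))·L_V·L_h·Δ_W`. -/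
theorem stmt4 {α : Type*} [PseudoMetricSpace α]
    (Thyb Tscen : BoundedContinuousFunction α ℝ → BoundedContinuousFunction α ℝ)
    (δ LV Lh ΔW : ℝ) (hδ : δ ∈ Set.Ioo (0 : ℝ) 1)
    (hLV : 0 ≤ LV) (hLh : 0 ≤ Lh) (hΔW : 0 ≤ ΔW)
    (hThyb : ∀ U W, dist (Thyb U) (Thyb W) ≤ δ * dist U W)
    (hTscen : ∀ U W, dist (Tscen U) (Tscen W) ≤ δ * dist U W)
    -- operator gap bound on `L_V`-Lipschitz value functions (Proposition 2)
    (hgap : ∀ V : BoundedContinuousFunction α ℝ,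
        (∀ s s', |V s - V s'| ≤ LV * dist s s') →
        dist (Thyb V) (Tscen V) ≤ δ * LV * Lh * ΔW)
    (Vhyb Vscen : BoundedContinuousFunction α ℝ)
    (hVhyb : Thyb Vhyb = Vhyb) (hVscen : Tscen Vscen = Vscen)
    -- the scenario-consistent fixed point is `L_V`-Lipschitz
    (hLip : ∀ s s', |Vscen s - Vscen s'| ≤ LV * dist s s') :
    dist Vhyb Vscen ≤ (δ / (1 - δ)) * (LV * Lh * ΔW) := by
  obtain ⟨hδ0, hδ1⟩ := hδ
  have h1 : dist Vhyb Vscen ≤ δ * dist Vhyb Vscen + δ * LV * Lh * ΔW := by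
    calc dist Vhyb Vscen = dist (Thyb Vhyb) (Tscen Vscen) := by rw [hVhyb, hVscen]
      _ ≤ dist (Thyb Vhyb) (Thyb Vscen) + dist (Thyb Vscen) (Tscen Vscen) := dist_triangle _ _ _
      _ ≤ δ * dist Vhyb Vscen + δ * LV * Lh * ΔW :=
          add_le_add (hThyb _ _) (hgap _ hLip)
  have h2 : (1 - δ) * dist Vhyb Vscen ≤ δ * LV * Lh * ΔW := by nlinarith
  rw [div_mul_eq_mul_div, le_div_iff₀ (by linarith)]
  nlinarith
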